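/- arXiv:1412.1062 — 4 statements merged into one kernel-verified Lean document; each statement's English description precedes it below -/
import Mathlib

section
/- Let n ≥ 1, let B be a continuous map from ℝⁿ to the space of continuous bilinear forms on ℝⁿ, and let f : ℝⁿ → ℝ be a C² function satisfying the Hessian equation D²f(x)(v,w) = f(x)·B(x)(v,w) for all x ∈ ℝⁿ and all v, w ∈ ℝⁿ. If there exists a point p ∈ ℝⁿ with f(p) = 0 and Df(p) = 0, then f is identically zero on ℝⁿ. -/
/-!
Along the line `t ↦ p + t • (x - p)` the function `g t = f (p + t • (x - p))` satisfies the
linear ODE `g'' = c g` with continuous coefficient `c t = B (p + t • (x - p)) (x - p) (x - p)`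
and zero initial data at `t = 0`; Grönwall's inequality for the pair `(g, g')` forces `g = 0`,
in particular `f x = g 1 = 0`.
-/

open Set

section

variable {E : Type*} [NormedAddCommGroup E] [NormedSpace ℝ E]

theorem eq_zero_of_hasDerivAt_of_hasDerivAt_smul {g g' : ℝ → E} {c : ℝ → ℝ} {a b : ℝ}
    (hc : ContinuousOn c (Icc a b)) (hg : ∀ t, HasDerivAt g (g' t) t)
    (hg' : ∀ t, HasDerivAt g' (c t • g t) t) (ha : g a = 0) (ha' : g' a = 0) :
    ∀ t ∈ Icc a b, g t = 0 := by
  obtain ⟨C, hC⟩ := isCompact_Icc.exists_bound_of_continuousOn hc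
  have hy : ∀ t, HasDerivAt (fun t => (g t, g' t)) (g' t, c t • g t) t :=
    fun t => (hg t).prodMk (hg' t)
  have bound : ∀ t ∈ Ico a b,
      ‖(g' t, c t • g t)‖ ≤ max 1 C * ‖(g t, g' t)‖ := by
    intro t ht
    have hct : ‖c t‖ ≤ max 1 C := (hC t (Ico_subset_Icc_self ht)).trans (le_max_right _ _)
    simp only [Prod.norm_def, norm_smul]
    refine max_le ?_ ?_
    · exact (le_max_right _ _).trans
        (le_mul_of_one_le_left (le_max_of_le_left (norm_nonneg _)) (le_max_left _ _))
    · exact mul_le_mul hct (le_max_left _ _) (norm_nonneg _) (zero_le_one.trans (le_max_left _ _))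
  intro t ht
  have := eq_zero_of_abs_deriv_le_mul_abs_self_of_eq_zero_right
    (fun t _ => (hy t).continuousAt.continuousWithinAt) (fun t _ => (hy t).hasDerivWithinAt)
    (by simp [ha, ha']) bound t ht
  exact congrArg Prod.fst this

theorem hasDerivAt_comp_add_smul {G : Type*} [NormedAddCommGroup G] [NormedSpace ℝ G]
    {F : E → G} (hF : Differentiable ℝ F) (p v : E) (t : ℝ) :
    HasDerivAt (fun t : ℝ => F (p + t • v)) (fderiv ℝ F (p + t • v) v) t := by
  have hline : HasDerivAt (fun t : ℝ => p + t • v) v t := by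
    simpa using ((hasDerivAt_id t).smul_const v).const_add p
  exact (hF _).hasFDerivAt.comp_hasDerivAt t hline

theorem eq_zero_of_fderiv_fderiv_eq_mul {B : E → E →L[ℝ] E →L[ℝ] ℝ} (hB : Continuous B)
    {f : E → ℝ} (hf : ContDiff ℝ 2 f)
    (heq : ∀ x v w, fderiv ℝ (fderiv ℝ f) x v w = f x * B x v w)
    {p : E} (hp0 : f p = 0) (hp1 : fderiv ℝ f p = 0) (x : E) : f x = 0 := by
  set v := x - p
  have hg : ∀ t : ℝ, HasDerivAt (fun t : ℝ => f (p + t • v)) (fderiv ℝ f (p + t • v) v) t :=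
    hasDerivAt_comp_add_smul (hf.differentiable (by norm_num)) p v
  have hg' : ∀ t : ℝ, HasDerivAt (fun t : ℝ => fderiv ℝ f (p + t • v) v)
      (B (p + t • v) v v • f (p + t • v)) t := by
    intro t
    have hdf := hasDerivAt_comp_add_smul
      ((hf.fderiv_right (m := 1) le_rfl).differentiable one_ne_zero) p v t
    have happly := (ContinuousLinearMap.apply ℝ ℝ v).hasFDerivAt.comp_hasDerivAt t hdf
    rwa [ContinuousLinearMap.apply_apply, heq, mul_comm] at happly
  have hc : Continuous fun t : ℝ => B (p + t • v) v v := by fun_prop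
  simpa [v] using eq_zero_of_hasDerivAt_of_hasDerivAt_smul (a := 0) (b := 1) hc.continuousOn
    hg hg' (by simpa using hp0) (by simp [hp1]) 1 (by norm_num)

end

theorem stmt_1_general (n : ℕ)
    (B : EuclideanSpace ℝ (Fin n) →
      EuclideanSpace ℝ (Fin n) →L[ℝ] EuclideanSpace ℝ (Fin n) →L[ℝ] ℝ)
    (hB : Continuous B)
    (f : EuclideanSpace ℝ (Fin n) → ℝ) (hf : ContDiff ℝ 2 f)
    (heq : ∀ (x v w : EuclideanSpace ℝ (Fin n)),
      fderiv ℝ (fderiv ℝ f) x v w = f x * B x v w)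
    (p : EuclideanSpace ℝ (Fin n)) (hp0 : f p = 0) (hp1 : fderiv ℝ f p = 0) :
    ∀ x, f x = 0 :=
  eq_zero_of_fderiv_fderiv_eq_mul hB hf heq hp0 hp1

/-- Euclidean version of Lemma 2.1(i): a C² solution of the Hessian equation
`D²f(x)(v,w) = f(x)·B(x)(v,w)` with continuous bilinear-form coefficient `B`
that vanishes to first order at a point vanishes identically. -/
theorem stmt_1 (n : ℕ) (hn : 1 ≤ n)
    (B : EuclideanSpace ℝ (Fin n) →
      EuclideanSpace ℝ (Fin n) →L[ℝ] EuclideanSpace ℝ (Fin n) →L[ℝ] ℝ)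
    (hB : Continuous B)
    (f : EuclideanSpace ℝ (Fin n) → ℝ) (hf : ContDiff ℝ 2 f)
    (heq : ∀ (x v w : EuclideanSpace ℝ (Fin n)),
      fderiv ℝ (fderiv ℝ f) x v w = f x * B x v w)
    (p : EuclideanSpace ℝ (Fin n)) (hp0 : f p = 0) (hp1 : fderiv ℝ f p = 0) :
    ∀ x, f x = 0 :=
  stmt_1_general n B hB f hf heq p hp0 hp1
end

section
/- Let n ≥ 1, let B be a continuous map from ℝⁿ to the space of continuous bilinear forms on ℝⁿ, and let f : ℝⁿ → ℝ be a C² function satisfying D²f(x)(v,w) = f(x)·B(x)(v,w) for all x ∈ ℝⁿ and all v, w ∈ ℝⁿ. Then for every differentiable curve c : [0,1] → ℝⁿ with f(c(t)) = 0 for all t ∈ [0,1], the function t ↦ |∇f(c(t))|² is constant on [0,1]. -/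
theorem Convex.fderiv_comp_eq_of_fderiv_fderiv_eq_zero {E F : Type*} [NormedAddCommGroup E]
    [NormedSpace ℝ E] [NormedAddCommGroup F] [NormedSpace ℝ F] {f : E → F}
    (hf : Differentiable ℝ (fderiv ℝ f)) {c : ℝ → E} {s : Set ℝ} (hs : Convex ℝ s)
    (hc : ∀ t ∈ s, DifferentiableAt ℝ c t)
    (hf₂ : ∀ t ∈ s, fderiv ℝ (fderiv ℝ f) (c t) = 0) {a b : ℝ} (ha : a ∈ s) (hb : b ∈ s) :
    fderiv ℝ f (c a) = fderiv ℝ f (c b) := by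
  have hdiff : ∀ t ∈ s, DifferentiableAt ℝ (fun t ↦ fderiv ℝ f (c t)) t :=
    fun t ht ↦ (hf (c t)).comp t (hc t ht)
  have hzero : ∀ t ∈ s, fderiv ℝ (fun t ↦ fderiv ℝ f (c t)) t = 0 := fun t ht ↦ by
    rw [fderiv_fun_comp t (hf (c t)) (hc t ht), hf₂ t ht, ContinuousLinearMap.zero_comp]
  have := hs.norm_image_sub_le_of_norm_fderiv_le (C := 0) hdiff
    (fun t ht ↦ by simp [hzero t ht]) ha hb
  rw [zero_mul, norm_le_zero_iff, sub_eq_zero] at this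
  exact this.symm

theorem fderiv_fderiv_eq_zero_of_hessian_eq_mul {E : Type*} [NormedAddCommGroup E]
    [NormedSpace ℝ E] {f : E → ℝ} {B : E → E →L[ℝ] E →L[ℝ] ℝ}
    (heq : ∀ x v w, fderiv ℝ (fderiv ℝ f) x v w = f x * B x v w) {x : E} (hx : f x = 0) :
    fderiv ℝ (fderiv ℝ f) x = 0 := by
  ext v w
  simp [heq, hx]

theorem stmt_3_general (n : ℕ)
    (B : EuclideanSpace ℝ (Fin n) →
      EuclideanSpace ℝ (Fin n) →L[ℝ] EuclideanSpace ℝ (Fin n) →L[ℝ] ℝ)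
    (f : EuclideanSpace ℝ (Fin n) → ℝ) (hf : ContDiff ℝ 2 f)
    (heq : ∀ (x v w : EuclideanSpace ℝ (Fin n)),
      fderiv ℝ (fderiv ℝ f) x v w = f x * B x v w) :
    ∀ c : ℝ → EuclideanSpace ℝ (Fin n),
      (∀ t ∈ Set.Icc (0:ℝ) 1, DifferentiableAt ℝ c t) →
      (∀ t ∈ Set.Icc (0:ℝ) 1, f (c t) = 0) →
      ∀ s ∈ Set.Icc (0:ℝ) 1, ∀ t ∈ Set.Icc (0:ℝ) 1,
        ‖gradient f (c s)‖ ^ 2 = ‖gradient f (c t)‖ ^ 2 := by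
  intro c hc hc0 s hs t ht
  have hfd : Differentiable ℝ (fderiv ℝ f) :=
    (hf.fderiv_right (m := 1) le_rfl).differentiable one_ne_zero
  have hDf : fderiv ℝ f (c s) = fderiv ℝ f (c t) :=
    (convex_Icc 0 1).fderiv_comp_eq_of_fderiv_fderiv_eq_zero hfd hc
      (fun u hu ↦ fderiv_fderiv_eq_zero_of_hessian_eq_mul heq (hc0 u hu)) hs ht
  simp only [gradient, hDf]

/-- Euclidean version of Lemma 2.1(i): for a C² solution of the Hessian equation
`D²f(x)(v,w) = f(x)·B(x)(v,w)`, the quantity `|∇f|²` is constant along any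
differentiable curve contained in the zero set of `f`. -/
theorem stmt_3 (n : ℕ) (hn : 1 ≤ n)
    (B : EuclideanSpace ℝ (Fin n) →
      EuclideanSpace ℝ (Fin n) →L[ℝ] EuclideanSpace ℝ (Fin n) →L[ℝ] ℝ)
    (hB : Continuous B)
    (f : EuclideanSpace ℝ (Fin n) → ℝ) (hf : ContDiff ℝ 2 f)
    (heq : ∀ (x v w : EuclideanSpace ℝ (Fin n)),
      fderiv ℝ (fderiv ℝ f) x v w = f x * B x v w) :
    ∀ c : ℝ → EuclideanSpace ℝ (Fin n),
      (∀ t ∈ Set.Icc (0:ℝ) 1, DifferentiableAt ℝ c t) →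
      (∀ t ∈ Set.Icc (0:ℝ) 1, f (c t) = 0) →
      ∀ s ∈ Set.Icc (0:ℝ) 1, ∀ t ∈ Set.Icc (0:ℝ) 1,
        ‖gradient f (c s)‖ ^ 2 = ‖gradient f (c t)‖ ^ 2 :=
  stmt_3_general n B f hf heq
end

section
/- Let Λ > 0, d > 0, and let φ : [0,d] → ℝ be a function with φ(t) > 0 for all t ∈ [0,d] which is Lipschitz with constant Λ, i.e. |φ(s) − φ(t)| ≤ Λ|s − t| for all s, t ∈ [0,d]. Then ∫₀^d φ(t)⁻¹ dt ≥ Λ⁻¹ · ln(1 + Λ d / φ(0)). -/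
/-! The Lipschitz bound gives `φ t ≤ φ 0 + Λ t` on `[0, d]`, so `∫ φ⁻¹` dominates the integral of
`(φ 0 + Λ t)⁻¹`, which is exactly `Λ⁻¹ log (1 + Λ d / φ 0)`. -/

open Set intervalIntegral

theorem integral_inv_add_mul {a c d : ℝ} (hc : c ≠ 0) (ha : 0 < a) (had : 0 < a + c * d) :
    ∫ t in (0 : ℝ)..d, (a + c * t)⁻¹ = c⁻¹ * Real.log (1 + c * d / a) := by
  have hzero : (0 : ℝ) ∉ uIcc a (a + c * d) := fun h ↦ by
    rcases le_total a (a + c * d) with hle | hle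
    · rw [uIcc_of_le hle] at h; linarith [h.1]
    · rw [uIcc_of_ge hle] at h; linarith [h.1]
  rw [integral_comp_add_mul (fun x ↦ x⁻¹) hc, mul_zero, add_zero, integral_inv hzero,
    smul_eq_mul, add_div, div_self ha.ne']

theorem integral_inv_anti_on {f g : ℝ → ℝ} {a b : ℝ} (hab : a ≤ b)
    (hf : ContinuousOn f (Icc a b)) (hg : ContinuousOn g (Icc a b))
    (hf_pos : ∀ x ∈ Icc a b, 0 < f x) (hfg : ∀ x ∈ Icc a b, f x ≤ g x) :
    ∫ x in a..b, (g x)⁻¹ ≤ ∫ x in a..b, (f x)⁻¹ := by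
  have hg_pos : ∀ x ∈ Icc a b, 0 < g x := fun x hx ↦ (hf_pos x hx).trans_le (hfg x hx)
  exact integral_mono_on hab
    ((hg.inv₀ fun x hx ↦ (hg_pos x hx).ne').intervalIntegrable_of_Icc hab)
    ((hf.inv₀ fun x hx ↦ (hf_pos x hx).ne').intervalIntegrable_of_Icc hab)
    fun x hx ↦ inv_anti₀ (hf_pos x hx) (hfg x hx)

/-- Analytic core of Lemma 3.2: a positive `Λ`-Lipschitz function `φ` on `[0,d]`
satisfies `∫₀^d φ⁻¹ ≥ Λ⁻¹ · log(1 + Λd/φ(0))`. -/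
theorem stmt_4 (Λ d : ℝ) (hΛ : 0 < Λ) (hd : 0 < d) (φ : ℝ → ℝ)
    (hpos : ∀ t ∈ Set.Icc (0:ℝ) d, 0 < φ t)
    (hlip : ∀ s ∈ Set.Icc (0:ℝ) d, ∀ t ∈ Set.Icc (0:ℝ) d,
      |φ s - φ t| ≤ Λ * |s - t|) :
    Λ⁻¹ * Real.log (1 + Λ * d / φ 0) ≤ ∫ t in (0:ℝ)..d, (φ t)⁻¹ := by
  have h0 : (0 : ℝ) ∈ Icc 0 d := ⟨le_rfl, hd.le⟩
  have hφ0 := hpos 0 h0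
  have hφ_cont : ContinuousOn φ (Icc 0 d) :=
    (LipschitzOnWith.of_dist_le_mul (K := ⟨Λ, hΛ.le⟩) hlip).continuousOn
  have hφ_le : ∀ t ∈ Icc 0 d, φ t ≤ φ 0 + Λ * t := fun t ht ↦ by
    have := (le_abs_self _).trans (hlip t ht 0 h0)
    rwa [sub_zero, abs_of_nonneg ht.1, sub_le_iff_le_add'] at this
  calc Λ⁻¹ * Real.log (1 + Λ * d / φ 0) = ∫ t in (0 : ℝ)..d, (φ 0 + Λ * t)⁻¹ :=
        (integral_inv_add_mul hΛ.ne' hφ0 (by positivity)).symm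
    _ ≤ ∫ t in (0 : ℝ)..d, (φ t)⁻¹ :=
        integral_inv_anti_on hd.le hφ_cont (by fun_prop) hpos hφ_le
end

section
/- Let μ be a Borel measure on ℝ² with μ({y : |y| ≤ r}) ≤ C·r² for all r > 0 and some constant C > 0, and let Q : ℝ² → ℝ be μ-integrable. For each integer m ≥ 1 define η_m : ℝ² → ℝ by η_m(y) = 1 if |y| ≤ e^m, η_m(y) = 2 − (ln|y|)/m if e^m ≤ |y| ≤ e^{2m}, and η_m(y) = 0 if |y| ≥ e^{2m}. Suppose there is a constant C₂ > 0 such that for every m ≥ 1, ∫_{ℝ²} Q·η_m² dμ ≤ (C₂/m²)·∫_{{y : e^m ≤ |y| ≤ e^{2m}}} |y|^{−2} dμ. Then ∫_{ℝ²} Q dμ ≤ 0. -/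
/-!
The integrals `∫ Q η_m² dμ` converge to `∫ Q dμ` by dominated convergence, since `0 ≤ η_m ≤ 1`
and `η_m → 1` pointwise. On the other side, cutting the annulus `e^m ≤ |y| ≤ e^{2m}` into the
`m` shells `e^k ≤ |y| ≤ e^{k+1}`, quadratic growth bounds `∫ |y|⁻² dμ` over each shell by
`e^{-2k} · C e^{2k+2} = C e²`, so the right-hand side is at most `C₂ C e² / m → 0`.
-/

open MeasureTheory

/-- The logarithmic cut-off function `η_m` of the proof of Theorem 4.2. -/
noncomputable def logCutoff (m : ℕ) (y : EuclideanSpace ℝ (Fin 2)) : ℝ :=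
  if ‖y‖ ≤ Real.exp m then 1
  else if ‖y‖ ≤ Real.exp (2 * m) then 2 - Real.log ‖y‖ / m
  else 0

open Real Set Filter Topology

theorem setLIntegral_biUnion_finset_le {α ι : Type*} [MeasurableSpace α] {μ : Measure α}
    (s : Finset ι) (t : ι → Set α) (f : α → ENNReal) :
    ∫⁻ x in ⋃ i ∈ s, t i, f x ∂μ ≤ ∑ i ∈ s, ∫⁻ x in t i, f x ∂μ := by
  classical
  induction s using Finset.induction_on with
  | empty => simp
  | insert i s hi ih =>
    rw [Finset.set_biUnion_insert, Finset.sum_insert hi]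
    exact (lintegral_union_le _ _ _).trans (add_le_add le_rfl ih)

theorem Icc_exp_subset_biUnion_Icc_exp {a b : ℕ} (hab : a < b) :
    Icc (exp a) (exp b) ⊆ ⋃ k ∈ Finset.Ico a b, Icc (exp k) (exp (k + 1)) := by
  intro x ⟨hax, hxb⟩
  have hx : 0 < x := (exp_pos _).trans_le hax
  have hat : (a : ℝ) ≤ log x := (le_log_iff_exp_le hx).2 hax
  have htb : log x ≤ b := (log_le_iff_le_exp hx).2 hxb
  have ht : 0 ≤ log x := (Nat.cast_nonneg a).trans hat
  have hak : a ≤ min ⌊log x⌋₊ (b - 1) := le_min ((Nat.le_floor_iff ht).2 hat) (by omega)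
  have hkt : ((min ⌊log x⌋₊ (b - 1) : ℕ) : ℝ) ≤ log x :=
    (Nat.cast_le.2 (min_le_left _ _)).trans (Nat.floor_le ht)
  have htk : log x ≤ (min ⌊log x⌋₊ (b - 1) : ℕ) + 1 := by
    rcases le_total ⌊log x⌋₊ (b - 1) with h | h
    · rw [min_eq_left h]; exact (Nat.lt_floor_add_one _).le
    · rw [min_eq_right h, Nat.cast_sub (by omega)]; push_cast; linarith
  refine mem_biUnion (Finset.mem_Ico.2 ⟨hak, by omega⟩) ⟨?_, ?_⟩
  · rwa [← le_log_iff_exp_le hx]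
  · rwa [← log_le_iff_le_exp hx]

section Annulus

variable {E : Type*} [NormedAddCommGroup E] [MeasurableSpace E] [OpensMeasurableSpace E]
  {μ : Measure E} {C d : ℝ}

theorem setLIntegral_shell_le (hd : 0 ≤ d)
    (hμ : ∀ r > (0 : ℝ), μ {y | ‖y‖ ≤ r} ≤ ENNReal.ofReal (C * r ^ d)) (t : ℝ) :
    ∫⁻ y in {y : E | ‖y‖ ∈ Icc (exp t) (exp (t + 1))}, ENNReal.ofReal (‖y‖ ^ (-d)) ∂μ
      ≤ ENNReal.ofReal (C * exp d) := by
  set S := {y : E | ‖y‖ ∈ Icc (exp t) (exp (t + 1))}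
  have hS : MeasurableSet S := measurable_norm measurableSet_Icc
  calc ∫⁻ y in S, ENNReal.ofReal (‖y‖ ^ (-d)) ∂μ
      ≤ ∫⁻ _ in S, ENNReal.ofReal (exp t ^ (-d)) ∂μ :=
        setLIntegral_mono' hS fun y hy =>
          ENNReal.ofReal_le_ofReal (rpow_le_rpow_of_nonpos (exp_pos t) hy.1 (neg_nonpos.2 hd))
    _ = ENNReal.ofReal (exp t ^ (-d)) * μ S := setLIntegral_const _ _
    _ ≤ ENNReal.ofReal (exp t ^ (-d)) * ENNReal.ofReal (C * exp (t + 1) ^ d) := by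
        gcongr
        exact (measure_mono fun y hy => hy.2).trans (hμ _ (exp_pos _))
    _ = ENNReal.ofReal (C * exp d) := by
        rw [← ENNReal.ofReal_mul (by positivity), ← exp_mul, ← exp_mul, mul_left_comm,
          ← exp_add]
        ring_nf

theorem setLIntegral_annulus_le (hd : 0 ≤ d)
    (hμ : ∀ r > (0 : ℝ), μ {y | ‖y‖ ≤ r} ≤ ENNReal.ofReal (C * r ^ d)) {a b : ℕ} (hab : a < b) :
    ∫⁻ y in {y : E | ‖y‖ ∈ Icc (exp a) (exp b)}, ENNReal.ofReal (‖y‖ ^ (-d)) ∂μ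
      ≤ (b - a : ℕ) * ENNReal.ofReal (C * exp d) := by
  calc ∫⁻ y in {y : E | ‖y‖ ∈ Icc (exp a) (exp b)}, ENNReal.ofReal (‖y‖ ^ (-d)) ∂μ
      ≤ ∫⁻ y in ⋃ k ∈ Finset.Ico a b, {y : E | ‖y‖ ∈ Icc (exp k) (exp (k + 1))},
          ENNReal.ofReal (‖y‖ ^ (-d)) ∂μ := by
        refine lintegral_mono_set fun y hy => ?_
        obtain ⟨k, hk, hyk⟩ := mem_iUnion₂.1 (Icc_exp_subset_biUnion_Icc_exp hab hy)
        exact mem_iUnion₂.2 ⟨k, hk, hyk⟩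
    _ ≤ ∑ k ∈ Finset.Ico a b, ∫⁻ y in {y : E | ‖y‖ ∈ Icc (exp k) (exp (k + 1))},
          ENNReal.ofReal (‖y‖ ^ (-d)) ∂μ := setLIntegral_biUnion_finset_le _ _ _
    _ ≤ ∑ _k ∈ Finset.Ico a b, ENNReal.ofReal (C * exp d) :=
        Finset.sum_le_sum fun k _ => setLIntegral_shell_le hd hμ k
    _ = (b - a : ℕ) * ENNReal.ofReal (C * exp d) := by
        rw [Finset.sum_const, Nat.card_Ico, nsmul_eq_mul]

theorem setIntegral_annulus_le (hC : 0 ≤ C) (hd : 0 ≤ d)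
    (hμ : ∀ r > (0 : ℝ), μ {y | ‖y‖ ≤ r} ≤ ENNReal.ofReal (C * r ^ d)) {a b : ℕ} (hab : a < b) :
    ∫ y in {y : E | ‖y‖ ∈ Icc (exp a) (exp b)}, ‖y‖ ^ (-d) ∂μ ≤ C * exp d * (b - a : ℕ) := by
  rw [integral_eq_lintegral_of_nonneg_ae (ae_of_all _ fun y => rpow_nonneg (norm_nonneg y) _)
    (by fun_prop : Measurable fun y : E => ‖y‖ ^ (-d)).aestronglyMeasurable]
  refine ENNReal.toReal_le_of_le_ofReal (by positivity)
    ((setLIntegral_annulus_le hd hμ hab).trans_eq ?_)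
  rw [ENNReal.ofReal_mul' (Nat.cast_nonneg _), ENNReal.ofReal_natCast, mul_comm]

end Annulus

theorem tendsto_integral_mul_of_tendsto_one {α ι : Type*} [MeasurableSpace α] {μ : Measure α}
    {l : Filter ι} [l.IsCountablyGenerated] {Q : α → ℝ} (hQ : Integrable Q μ) {φ : ι → α → ℝ}
    (hφ_meas : ∀ i, AEStronglyMeasurable (φ i) μ) (hφ_le : ∀ i x, ‖φ i x‖ ≤ 1)
    (hφ_lim : ∀ x, Tendsto (φ · x) l (𝓝 1)) :
    Tendsto (fun i => ∫ x, Q x * φ i x ∂μ) l (𝓝 (∫ x, Q x ∂μ)) :=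
  tendsto_integral_filter_of_dominated_convergence (fun x => ‖Q x‖)
    (Eventually.of_forall fun i => hQ.aestronglyMeasurable.mul (hφ_meas i))
    (Eventually.of_forall fun i => ae_of_all _ fun x => by
      rw [norm_mul]; exact mul_le_of_le_one_right (norm_nonneg _) (hφ_le i x))
    hQ.norm (ae_of_all _ fun x => by simpa using (hφ_lim x).const_mul (Q x))

theorem measurable_logCutoff (m : ℕ) : Measurable (logCutoff m) := by
  unfold logCutoff
  refine Measurable.ite (measurableSet_le measurable_norm measurable_const) measurable_const ?_
  refine Measurable.ite (measurableSet_le measurable_norm measurable_const) ?_ measurable_const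
  exact measurable_const.sub ((measurable_log.comp measurable_norm).div_const _)

theorem logCutoff_mem_Icc (m : ℕ) (y : EuclideanSpace ℝ (Fin 2)) : logCutoff m y ∈ Icc 0 1 := by
  unfold logCutoff
  split_ifs with h₁ h₂
  · simp
  · have hy : 0 < ‖y‖ := (exp_pos _).trans (not_le.1 h₁)
    have hlo : (m : ℝ) < log ‖y‖ := (lt_log_iff_exp_lt hy).2 (not_le.1 h₁)
    have hhi : log ‖y‖ ≤ 2 * m := (log_le_iff_le_exp hy).2 h₂
    have hm : (0 : ℝ) < m := by linarith
    constructor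
    · rw [sub_nonneg, div_le_iff₀ hm]; linarith
    · rw [sub_le_comm, le_div_iff₀ hm]; linarith
  · simp

theorem tendsto_logCutoff (y : EuclideanSpace ℝ (Fin 2)) :
    Tendsto (fun m => logCutoff m y) atTop (𝓝 1) := by
  refine tendsto_const_nhds.congr' ?_
  filter_upwards [(tendsto_exp_atTop.comp tendsto_natCast_atTop_atTop).eventually_ge_atTop ‖y‖]
    with m hm using (if_pos hm).symm

theorem tendsto_integral_mul_logCutoff_sq {μ : Measure (EuclideanSpace ℝ (Fin 2))}
    {Q : EuclideanSpace ℝ (Fin 2) → ℝ} (hQ : Integrable Q μ) :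
    Tendsto (fun m : ℕ => ∫ y, Q y * logCutoff m y ^ 2 ∂μ) atTop (𝓝 (∫ y, Q y ∂μ)) := by
  refine tendsto_integral_mul_of_tendsto_one hQ
    (fun m => ((measurable_logCutoff m).pow_const 2).aestronglyMeasurable) (fun m y => ?_)
    (fun y => by simpa using (tendsto_logCutoff y).pow 2)
  obtain ⟨h₀, h₁⟩ := logCutoff_mem_Icc m y
  rw [norm_pow, norm_of_nonneg h₀]
  exact pow_le_one₀ h₀ h₁

/-- Logarithmic cut-off argument in the proof of Theorem 4.2: if `μ` has quadratic
growth, `Q` is `μ`-integrable, and `∫ Q η_m² dμ ≤ (C₂/m²)∫_{annulus} |y|⁻² dμ` for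
every `m ≥ 1`, then `∫ Q dμ ≤ 0`. -/
theorem stmt_10 (μ : Measure (EuclideanSpace ℝ (Fin 2)))
    (C C₂ : ℝ) (hC : 0 < C) (hC₂ : 0 < C₂)
    (hμ : ∀ r > (0:ℝ), μ {y : EuclideanSpace ℝ (Fin 2) | ‖y‖ ≤ r}
      ≤ ENNReal.ofReal (C * r ^ 2))
    (Q : EuclideanSpace ℝ (Fin 2) → ℝ) (hQ : Integrable Q μ)
    (hineq : ∀ m : ℕ, 1 ≤ m →
      (∫ y, Q y * (logCutoff m y) ^ 2 ∂μ)
        ≤ (C₂ / (m : ℝ) ^ 2) *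
          (∫ y in {y : EuclideanSpace ℝ (Fin 2) |
              Real.exp m ≤ ‖y‖ ∧ ‖y‖ ≤ Real.exp (2 * m)}, ‖y‖ ^ (-2 : ℝ) ∂μ)) :
    (∫ y, Q y ∂μ) ≤ 0 := by
  have hμ' : ∀ r > (0 : ℝ), μ {y | ‖y‖ ≤ r} ≤ ENNReal.ofReal (C * r ^ (2 : ℝ)) := by
    simpa only [rpow_two] using hμ
  have hbound : ∀ m : ℕ, 1 ≤ m → ∫ y, Q y * logCutoff m y ^ 2 ∂μ ≤ C₂ * (C * exp 2) / m := by
    intro m hm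
    have hann := setIntegral_annulus_le hC.le zero_le_two hμ' (a := m) (b := 2 * m) (by omega)
    rw [show 2 * m - m = m by omega, Nat.cast_mul, Nat.cast_ofNat] at hann
    have hm₀ : (0 : ℝ) < m := by exact_mod_cast hm
    calc ∫ y, Q y * logCutoff m y ^ 2 ∂μ ≤ _ := hineq m hm
      _ ≤ C₂ / m ^ 2 * (C * exp 2 * m) := by gcongr; exact hann
      _ = C₂ * (C * exp 2) / m := by field_simp
  refine le_of_tendsto_of_tendsto (tendsto_integral_mul_logCutoff_sq hQ)
    (tendsto_const_div_atTop_nhds_zero_nat (C₂ * (C * exp 2))) ?_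
  filter_upwards [eventually_ge_atTop 1] with m hm using hbound m hm
end
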